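/- arXiv:1903.01094 — 3 statements merged into one kernel-verified Lean document; each statement's English description precedes it below -/
import Mathlib

section
/- Let C be a k-linear Hom-finite small category. The categories of finitely generated C-modules and of finitely cogenerated C-modules are Hom-finite Krull–Schmidt categories: every object decomposes into a finite direct sum of objects with local endomorphism rings. -/
/-!
A finitely generated `M` is a quotient of a finite sum of representables `C(a, -)`, so by Yoneda
`Hom(M, N)` embeds into `⊕ N(aᵢ)`, and finitely generated modules are pointwise finite dimensional
because `C` is Hom-finite. Dually `Hom(M, D C(-, a)) ≅ D M(a)` handles finitely cogenerated modules.

In any idempotent-complete `k`-linear category with finite biproducts, an object with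
finite-dimensional `End M` is a finite sum of objects with local endomorphism rings, by induction
on `dim End M`: by Fitting's lemma a finite-dimensional algebra without nontrivial idempotents is
local, and a nontrivial idempotent splits `M ≅ A ⊞ B` with `End A`, `End B` proper corners of
`End M`.
-/

noncomputable section
namespace ARPaper
open CategoryTheory CategoryTheory.Limits Opposite

universe u v

variable (k : Type) [Field k]

/-- The category of `C`-modules: `k`-linear functors `C ⥤ Mod k`. -/
abbrev Mod (C : Type) [SmallCategory C] : Type 1 := C ⥤ ModuleCat.{0} k

variable (C : Type) [SmallCategory C] [Preadditive C] [Linear k C]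

instance : HasFiniteBiproducts (Mod k C) := HasFiniteBiproducts.of_hasFiniteProducts

/-- The representable projective `C(a,-)`. -/
def stdProj (a : C) : Mod k C := (linearCoyoneda k C).obj (op a)

/-- The `k`-linear duality functor `D = Hom_k(-,k)` on `Mod k`, from the opposite category. -/
def dualOp : (ModuleCat k)ᵒᵖ ⥤ ModuleCat k where
  obj M := ModuleCat.of k (Module.Dual k M.unop)
  map f := ModuleCat.ofHom f.unop.hom.dualMap
  map_id X := by ext f; rfl
  map_comp f g := by ext x; rfl

/-- `D` applied to a `k`-module. -/
def DOf (V : ModuleCat k) : ModuleCat k := ModuleCat.of k (Module.Dual k V)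

/-- `D` applied to a linear map (contravariantly). -/
def DMap {V W : ModuleCat k} (f : V ⟶ W) : DOf k W ⟶ DOf k V :=
  ModuleCat.ofHom f.hom.dualMap

/-- `D` of a `Cᵒᵖ`-module, giving a `C`-module. -/
def DModL (N : Cᵒᵖ ⥤ ModuleCat k) : Mod k C := N.rightOp ⋙ dualOp k

/-- `D` of a `C`-module, giving a `Cᵒᵖ`-module. -/
def DModR (M : Mod k C) : Cᵒᵖ ⥤ ModuleCat k := M.op ⋙ dualOp k

/-- The standard finitely cogenerated injective `D C(-,a)`. -/
def stdInj (a : C) : Mod k C := DModL k C ((linearYoneda k C).obj a)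

/-- `X` is a direct summand of `Y`. -/
def IsSummand {D : Type u} [Category.{v} D] (X Y : D) : Prop :=
  ∃ (s : X ⟶ Y) (r : Y ⟶ X), s ≫ r = 𝟙 X

/-- Finitely generated projective: a direct summand of a finite direct sum of representables. -/
def FGProj (P : Mod k C) : Prop :=
  ∃ (n : ℕ) (a : Fin n → C), IsSummand P (⨁ fun i => stdProj k C (a i))

/-- Finitely cogenerated injective: a summand of a finite direct sum of the `D C(-,a)`. -/
def FCGInj (I : Mod k C) : Prop :=
  ∃ (n : ℕ) (a : Fin n → C), IsSummand I (⨁ fun i => stdInj k C (a i))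

/-- Finitely generated module: admits an epimorphism from a f.g. projective. -/
def FGmod (M : Mod k C) : Prop :=
  ∃ (P : Mod k C) (p : P ⟶ M), FGProj k C P ∧ Epi p

/-- Finitely cogenerated module: admits a monomorphism into a f.cog. injective. -/
def FCGmod (M : Mod k C) : Prop :=
  ∃ (I : Mod k C) (m : M ⟶ I), FCGInj k C I ∧ Mono m

/-- Finitely copresented module. -/
def FCPmod (M : Mod k C) : Prop :=
  ∃ (I : Mod k C) (m : M ⟶ I), FCGInj k C I ∧ Mono m ∧ FCGmod k C (cokernel m)

end ARPaper

open CategoryTheory CategoryTheory.Limits Module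

theorem isUnit_or_isNilpotent_of_forall_isIdempotentElem {R : Type*} [Ring R]
    [IsArtinianRing R] [IsNoetherianRing R]
    (h : ∀ e : R, IsIdempotentElem e → e = 0 ∨ e = 1) (x : R) : IsUnit x ∨ IsNilpotent x := by
  -- Fitting's lemma for right multiplication `f` by `x` splits `R = ker fⁿ⁺¹ ⊕ range fⁿ⁺¹` into
  -- left ideals, so the projection onto the kernel is right multiplication by an idempotent.
  set f : Module.End R R := AlgEquiv.moduleEndSelf ℕ (MulOpposite.op x)
  have hf : ∀ (m : ℕ) (r : R), (f ^ m) r = r * x ^ m := by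
    intro m r
    simp [f, ← map_pow]
  obtain ⟨n, hn⟩ := Filter.eventually_atTop.mp f.eventually_isCompl_ker_pow_range_pow
  have hc := hn (n + 1) (by omega)
  set P := Submodule.projection _ _ hc
  have hP : ∀ r : R, P r = r * P 1 := fun r => by simpa using P.map_smul r 1
  have hidem : IsIdempotentElem (P 1) := by
    rw [IsIdempotentElem, ← hP, Submodule.projection_apply_of_mem_left hc (by simp [P])]
  rcases h _ hidem with h0 | h1
  · left
    have hinj : Function.Injective (f ^ (n + 1)) := by
      rw [← LinearMap.ker_eq_bot, eq_bot_iff]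
      intro r hr
      rw [Submodule.mem_bot, ← Submodule.projection_apply_of_mem_left hc hr, hP, h0, mul_zero]
    refine IsArtinianRing.isUnit_iff_isRightRegular.mpr fun r s hrs => hinj ?_
    rw [hf, hf, pow_succ', ← mul_assoc, ← mul_assoc]
    exact congrArg (· * x ^ n) hrs
  · right
    refine ⟨n + 1, ?_⟩
    have : (1 : R) ∈ LinearMap.ker (f ^ (n + 1)) := h1 ▸ Submodule.projection_apply_mem hc 1
    simpa [hf] using this

theorem isLocalRing_of_forall_isIdempotentElem {R : Type*} [Ring R] [Nontrivial R]
    [IsArtinianRing R] [IsNoetherianRing R]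
    (h : ∀ e : R, IsIdempotentElem e → e = 0 ∨ e = 1) : IsLocalRing R :=
  .of_isUnit_or_isUnit_one_sub_self fun x =>
    (isUnit_or_isNilpotent_of_forall_isIdempotentElem h x).imp_right IsNilpotent.isUnit_one_sub

namespace CategoryTheory

namespace Retract

variable {D : Type*} [Category D] {A B M : D}

theorem conj_injective (h : Retract A M) : Function.Injective fun f : A ⟶ A => h.r ≫ f ≫ h.i :=
  fun f g hfg => by simpa using congrArg (h.i ≫ · ≫ h.r) hfg

variable [Preadditive D]

theorem i_comp_r_eq_zero_of_add_eq_id (hA : Retract A M) (hB : Retract B M)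
    (h : hA.r ≫ hA.i + hB.r ≫ hB.i = 𝟙 M) : hA.i ≫ hB.r = 0 := by
  have : hA.i ≫ hB.r ≫ hB.i = 0 := by
    simpa [Preadditive.comp_add] using congrArg (hA.i ≫ ·) h
  simpa using congrArg (· ≫ hB.r) this

def isoBiprod [HasBinaryBiproducts D] (hA : Retract A M) (hB : Retract B M)
    (h : hA.r ≫ hA.i + hB.r ≫ hB.i = 𝟙 M) : M ≅ A ⊞ B where
  hom := biprod.lift hA.r hB.r
  inv := biprod.desc hA.i hB.i
  hom_inv_id := by simpa using h
  inv_hom_id := by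
    have hAB := i_comp_r_eq_zero_of_add_eq_id hA hB h
    have hBA := i_comp_r_eq_zero_of_add_eq_id hB hA (by rw [add_comm, h])
    ext <;> simp [hAB, hBA]

variable (k : Type*) [Field k] [Linear k D]

theorem finiteDimensional_end (h : Retract A M) [FiniteDimensional k (M ⟶ M)] :
    FiniteDimensional k (A ⟶ A) :=
  .of_injective ((Linear.leftComp k M h.r).comp (Linear.rightComp k A h.i)) h.conj_injective

theorem finrank_end_lt (h : Retract A M) (hne : h.r ≫ h.i ≠ 𝟙 M)
    [FiniteDimensional k (M ⟶ M)] : finrank k (A ⟶ A) < finrank k (M ⟶ M) := by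
  set φ := (Linear.leftComp k M h.r).comp (Linear.rightComp k A h.i)
  have : LinearMap.range φ ≠ ⊤ := by
    intro htop
    obtain ⟨f, hf⟩ : 𝟙 M ∈ LinearMap.range φ := htop ▸ Submodule.mem_top
    change h.r ≫ f ≫ h.i = 𝟙 M at hf
    apply hne
    calc h.r ≫ h.i = h.r ≫ h.i ≫ h.r ≫ f ≫ h.i := by rw [hf, Category.comp_id]
      _ = 𝟙 M := by simpa using hf
  rw [← LinearMap.finrank_range_of_inj (f := φ) h.conj_injective]
  exact Submodule.finrank_lt this

end Retract

variable {D : Type*} [Category D]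

theorem exists_retract_of_isIdempotentElem [IsIdempotentComplete D] {M : D} {e : End M}
    (he : IsIdempotentElem e) : ∃ (A : D) (h : Retract A M), h.r ≫ h.i = e := by
  obtain ⟨A, i, r, hir, hri⟩ := IsIdempotentComplete.idempotents_split M e he
  exact ⟨A, ⟨i, r, hir⟩, hri⟩

section KrullSchmidt

variable [Preadditive D] [HasFiniteBiproducts D]

attribute [local instance] hasBinaryBiproducts_of_finite_biproducts

def biprodIsoBiproductSum {ι κ : Type} [Fintype ι] [Fintype κ] (H : ι ⊕ κ → D) :
    (⨁ fun i => H (.inl i)) ⊞ (⨁ fun j => H (.inr j)) ≅ ⨁ H where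
  hom := biprod.desc (biproduct.desc fun i => biproduct.ι H (.inl i))
    (biproduct.desc fun j => biproduct.ι H (.inr j))
  inv := biprod.lift (biproduct.lift fun i => biproduct.π H (.inl i))
    (biproduct.lift fun j => biproduct.π H (.inr j))
  hom_inv_id := by
    classical
    ext <;> simp [biproduct.ι_π]
  inv_hom_id := by
    classical
    ext (i | j) (i' | j') <;> simp [biproduct.lift_desc, Preadditive.comp_sum,
      Preadditive.sum_comp, biproduct.ι_π_assoc, biproduct.ι_π, dite_comp, Finset.sum_dite_eq]

def HasLocalDecomposition (M : D) : Prop :=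
  ∃ (n : ℕ) (F : Fin n → D), (∀ i, IsLocalRing (End (F i))) ∧ Nonempty (M ≅ ⨁ F)

namespace HasLocalDecomposition

theorem of_iso {M N : D} (e : M ≅ N) (h : HasLocalDecomposition N) : HasLocalDecomposition M :=
  let ⟨n, F, hF, ⟨e'⟩⟩ := h
  ⟨n, F, hF, ⟨e ≪≫ e'⟩⟩

theorem of_isZero {M : D} (hM : IsZero M) : HasLocalDecomposition M :=
  ⟨0, Fin.elim0, fun i => i.elim0, ⟨hM.iso ((IsZero.iff_id_eq_zero _).mpr
    (biproduct.hom_ext _ _ fun j => j.elim0))⟩⟩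

theorem of_isLocalRing {M : D} (hM : IsLocalRing (End M)) : HasLocalDecomposition M :=
  ⟨1, fun _ => M, fun _ => hM, ⟨(biproductUniqueIso fun _ : Fin 1 => M).symm⟩⟩

theorem biprod {A B : D} (hA : HasLocalDecomposition A) (hB : HasLocalDecomposition B) :
    HasLocalDecomposition (A ⊞ B) := by
  obtain ⟨n, F, hF, ⟨eA⟩⟩ := hA
  obtain ⟨m, G, hG, ⟨eB⟩⟩ := hB
  have hFG : ∀ s, IsLocalRing (End (Sum.elim F G s)) := by
    rintro (i | j)
    exacts [hF i, hG j]
  exact ⟨n + m, fun l => Sum.elim F G (finSumFinEquiv.symm l), fun l => hFG _,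
    ⟨biprod.mapIso eA eB ≪≫ biprodIsoBiproductSum (Sum.elim F G) ≪≫
      biproduct.whiskerEquiv finSumFinEquiv fun s => eqToIso (by simp)⟩⟩

end HasLocalDecomposition

variable (k : Type*) [Field k] [Linear k D] [IsIdempotentComplete D]

theorem hasLocalDecomposition_of_finiteDimensional (M : D) [FiniteDimensional k (M ⟶ M)] :
    HasLocalDecomposition M := by
  induction hd : finrank k (M ⟶ M) using Nat.strong_induction_on generalizing M with
  | _ d ih =>
    by_cases hz : IsZero M
    · exact .of_isZero hz
    by_cases hl : IsLocalRing (End M)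
    · exact .of_isLocalRing hl
    have : Nontrivial (End M) := ⟨𝟙 M, 0, fun h => hz ((IsZero.iff_id_eq_zero M).mpr h)⟩
    have : FiniteDimensional k (End M) := ‹FiniteDimensional k (M ⟶ M)›
    have : IsArtinianRing (End M) := .of_finite k _
    have : IsNoetherianRing (End M) := isNoetherian_of_tower k inferInstance
    obtain ⟨e, he, he0, he1⟩ : ∃ e : End M, IsIdempotentElem e ∧ e ≠ 0 ∧ e ≠ 1 := by
      by_contra! h
      exact hl <| isLocalRing_of_forall_isIdempotentElem fun e he =>
        or_iff_not_imp_left.mpr (h e he)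
    obtain ⟨A, hA, hAe⟩ := exists_retract_of_isIdempotentElem he
    obtain ⟨B, hB, hBe⟩ := exists_retract_of_isIdempotentElem he.one_sub
    have := hA.finiteDimensional_end k
    have := hB.finiteDimensional_end k
    refine (HasLocalDecomposition.biprod (ih _ ?_ A rfl) (ih _ ?_ B rfl)).of_iso
      (hA.isoBiprod hB (by rw [hAe, hBe]; exact add_sub_cancel e 1))
    · exact hd ▸ hA.finrank_end_lt k (hAe ▸ he1)
    · exact hd ▸ hB.finrank_end_lt k (hBe ▸ by simpa using he0)

end KrullSchmidt

section HomFinite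

variable {D : Type*} [Category D] [Preadditive D] (k : Type*) [Field k] [Linear k D]

theorem finiteDimensional_hom_of_epi {P M N : D} (p : P ⟶ M) [Epi p]
    [FiniteDimensional k (P ⟶ N)] : FiniteDimensional k (M ⟶ N) :=
  .of_injective (Linear.leftComp k N p) fun _ _ h => (cancel_epi p).mp h

theorem finiteDimensional_hom_of_mono {M N I : D} (m : N ⟶ I) [Mono m]
    [FiniteDimensional k (M ⟶ I)] : FiniteDimensional k (M ⟶ N) :=
  .of_injective (Linear.rightComp k M m) fun _ _ h => (cancel_mono m).mp h

theorem finiteDimensional_hom_biproduct_left {ι : Type*} [Finite ι] (f : ι → D) [HasBiproduct f]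
    (N : D) [∀ i, FiniteDimensional k (f i ⟶ N)] : FiniteDimensional k (⨁ f ⟶ N) :=
  .of_injective (LinearMap.pi fun i => Linear.leftComp k N (biproduct.ι f i))
    fun _ _ h => biproduct.hom_ext' _ _ fun i => congrFun h i

theorem finiteDimensional_hom_biproduct_right {ι : Type*} [Finite ι] (M : D) (f : ι → D)
    [HasBiproduct f] [∀ i, FiniteDimensional k (M ⟶ f i)] : FiniteDimensional k (M ⟶ ⨁ f) :=
  .of_injective (LinearMap.pi fun i => Linear.rightComp k M (biproduct.π f i))
    fun _ _ h => biproduct.hom_ext _ _ fun i => congrFun h i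

theorem finiteDimensional_obj_biproduct {C : Type*} [Category C] {ι : Type} [Fintype ι]
    (F : ι → C ⥤ ModuleCat.{0} k) [HasBiproduct F] (b : C)
    [∀ i, FiniteDimensional k ((F i).obj b)] : FiniteDimensional k ((⨁ F).obj b) :=
  .equiv (M := ∀ i, (F i).obj b)
    (((evaluation C _).obj b).mapBiproduct F ≪≫ ModuleCat.biproductIsoPi _).toLinearEquiv.symm

end HomFinite

end CategoryTheory

namespace ARPaper

variable {k : Type} [Field k] {C : Type} [SmallCategory C] [Preadditive C] [Linear k C]

theorem finiteDimensional_hom_stdProj (a : C) (N : Mod k C) [FiniteDimensional k (N.obj a)] :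
    FiniteDimensional k (stdProj k C a ⟶ N) := by
  refine .of_injective (LinearMap.applyₗ (R := k) (𝟙 a : (stdProj k C a).obj a) ∘ₗ
    ModuleCat.homLinearEquiv.toLinearMap ∘ₗ NatTrans.appLinearMap a) fun η η' h => ?_
  have key : ∀ (η : stdProj k C a ⟶ N) (b : C) (g : a ⟶ b),
      (η.app b).hom g = (N.map g).hom ((η.app a).hom (𝟙 a)) := by
    intro η b g
    have := congr_arg (fun φ => φ.hom (𝟙 a)) (η.naturality g)
    change (η.app b).hom (𝟙 a ≫ g) = (N.map g).hom ((η.app a).hom (𝟙 a)) at this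
    rwa [Category.id_comp] at this
  ext b (g : a ⟶ b)
  rw [key η, key η']
  exact congr_arg _ h

theorem finiteDimensional_hom_stdInj (M : Mod k C) (a : C) [FiniteDimensional k (M.obj a)] :
    FiniteDimensional k (M ⟶ stdInj k C a) := by
  refine .of_injective (LinearMap.llcomp k (M.obj a) _ k (LinearMap.applyₗ (R := k) (𝟙 a : a ⟶ a))
    ∘ₗ ModuleCat.homLinearEquiv.toLinearMap ∘ₗ NatTrans.appLinearMap a) fun η η' h => ?_
  have key : ∀ (η : M ⟶ stdInj k C a) (b : C) (x : M.obj b) (f : b ⟶ a),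
      (show Dual k (b ⟶ a) from (η.app b).hom x) f =
        (show Dual k (a ⟶ a) from (η.app a).hom ((M.map f).hom x)) (𝟙 a) := by
    intro η b x f
    have := congr_arg (fun φ => (show Dual k (a ⟶ a) from φ.hom x) (𝟙 a)) (η.naturality f)
    change _ = (show Dual k (b ⟶ a) from (η.app b).hom x) (f ≫ 𝟙 a) at this
    rw [Category.comp_id] at this
    exact this.symm
  ext b x
  refine LinearMap.ext fun (f : b ⟶ a) => ?_
  exact (key η b x f).trans ((LinearMap.congr_fun h _).trans (key η' b x f).symm)

theorem FGmod.exists_epi {M : Mod k C} (hM : FGmod k C M) :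
    ∃ (n : ℕ) (a : Fin n → C) (p : (⨁ fun i => stdProj k C (a i)) ⟶ M), Epi p := by
  obtain ⟨P, p, ⟨n, a, s, r, hsr⟩, hp⟩ := hM
  have : IsSplitEpi r := .mk' ⟨s, hsr⟩
  exact ⟨n, a, r ≫ p, epi_comp r p⟩

theorem FCGmod.exists_mono {M : Mod k C} (hM : FCGmod k C M) :
    ∃ (n : ℕ) (a : Fin n → C) (m : M ⟶ ⨁ fun i => stdInj k C (a i)), Mono m := by
  obtain ⟨I, m, ⟨n, a, s, r, hsr⟩, hm⟩ := hM
  have : IsSplitMono s := .mk' ⟨r, hsr⟩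
  exact ⟨n, a, m ≫ s, mono_comp m s⟩

theorem FGmod.finiteDimensional_hom {M N : Mod k C} (hM : FGmod k C M)
    (hN : ∀ b, FiniteDimensional k (N.obj b)) : FiniteDimensional k (M ⟶ N) := by
  obtain ⟨n, a, p, hp⟩ := hM.exists_epi
  have (i : Fin n) := finiteDimensional_hom_stdProj (a i) N
  have := finiteDimensional_hom_biproduct_left k (fun i => stdProj k C (a i)) N
  exact finiteDimensional_hom_of_epi k p

theorem FCGmod.finiteDimensional_hom {M N : Mod k C} (hM : ∀ b, FiniteDimensional k (M.obj b))
    (hN : FCGmod k C N) : FiniteDimensional k (M ⟶ N) := by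
  obtain ⟨n, a, m, hm⟩ := hN.exists_mono
  have (i : Fin n) := finiteDimensional_hom_stdInj M (a i)
  have := finiteDimensional_hom_biproduct_right k M (fun i => stdInj k C (a i))
  exact finiteDimensional_hom_of_mono k m

variable [∀ a b : C, FiniteDimensional k (a ⟶ b)]

theorem FGmod.finiteDimensional_obj {M : Mod k C} (hM : FGmod k C M) (b : C) :
    FiniteDimensional k (M.obj b) := by
  obtain ⟨n, a, p, hp⟩ := hM.exists_epi
  have (i : Fin n) : FiniteDimensional k ((stdProj k C (a i)).obj b) :=
    inferInstanceAs (FiniteDimensional k (a i ⟶ b))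
  have := finiteDimensional_obj_biproduct k (fun i => stdProj k C (a i)) b
  exact .of_surjective (p.app b).hom ((ModuleCat.epi_iff_surjective _).mp inferInstance)

theorem FCGmod.finiteDimensional_obj {M : Mod k C} (hM : FCGmod k C M) (b : C) :
    FiniteDimensional k (M.obj b) := by
  obtain ⟨n, a, m, hm⟩ := hM.exists_mono
  have (i : Fin n) : FiniteDimensional k ((stdInj k C (a i)).obj b) :=
    inferInstanceAs (FiniteDimensional k (Dual k (b ⟶ a i)))
  have := finiteDimensional_obj_biproduct k (fun i => stdInj k C (a i)) b
  exact .of_injective (m.app b).hom ((ModuleCat.mono_iff_injective _).mp inferInstance)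

end ARPaper

open CategoryTheory CategoryTheory.Limits ARPaper in
/-- The categories of finitely generated and of finitely cogenerated
`C`-modules are Hom-finite and Krull–Schmidt: Hom spaces are finite dimensional and
every object is a finite direct sum of objects with local endomorphism rings. -/
theorem fg_fcg_homFinite_krullSchmidt
    (k : Type) [Field k] (C : Type) [SmallCategory C] [Preadditive C]
    [CategoryTheory.Linear k C] [∀ a b : C, FiniteDimensional k (a ⟶ b)] :
    (∀ M N : Mod k C, FGmod k C M → FGmod k C N → FiniteDimensional k (M ⟶ N)) ∧
    (∀ M N : Mod k C, FCGmod k C M → FCGmod k C N → FiniteDimensional k (M ⟶ N)) ∧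
    (∀ M : Mod k C, FGmod k C M →
      ∃ (n : ℕ) (F : Fin n → Mod k C),
        (∀ i, IsLocalRing (End (F i))) ∧ Nonempty (M ≅ ⨁ F)) ∧
    (∀ M : Mod k C, FCGmod k C M →
      ∃ (n : ℕ) (F : Fin n → Mod k C),
        (∀ i, IsLocalRing (End (F i))) ∧ Nonempty (M ≅ ⨁ F)) := by
  refine ⟨fun M N hM hN => hM.finiteDimensional_hom hN.finiteDimensional_obj,
    fun M N hM hN => hN.finiteDimensional_hom hM.finiteDimensional_obj, fun M hM => ?_,
    fun M hM => ?_⟩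
  · have := hM.finiteDimensional_hom hM.finiteDimensional_obj
    exact hasLocalDecomposition_of_finiteDimensional k M
  · have := hM.finiteDimensional_hom hM.finiteDimensional_obj
    exact hasLocalDecomposition_of_finiteDimensional k M
end
end

section
/- Let C be a k-linear Hom-finite category of type A_∞ (objects are natural numbers, C(j,i)=0 for i<j). Then every finitely cogenerated injective C-module is finite dimensional, i.e., only finitely many values are nonzero and each is finite dimensional over k. -/
/-!
Being finite dimensional passes to finite biproducts and to retracts, so it suffices to treat
`D C(-,a)`. Its value at `x` is the dual of the finite dimensional space `C(x,a)`, which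
vanishes for `x > a` in type `A_∞`.
-/

noncomputable section
namespace ARPaper
open CategoryTheory

/-- A `C`-module is finite dimensional if only finitely many of its values are nonzero
and each value is a finite dimensional `k`-vector space. -/
def FinDim {k : Type} [Field k] {C : Type} [SmallCategory C] (M : Mod k C) : Prop :=
  (∀ a : C, FiniteDimensional k (M.obj a)) ∧ Set.Finite {a : C | ¬ Subsingleton (M.obj a)}

end ARPaper

namespace ARPaper

open CategoryTheory CategoryTheory.Limits

variable {k : Type} [Field k]

section

variable {C : Type} [SmallCategory C]

theorem FinDim.of_isSummand {M N : Mod k C} (h : IsSummand M N) (hN : FinDim N) :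
    FinDim M := by
  obtain ⟨s, r, hsr⟩ := h
  have hrs (x : C) (m : M.obj x) : r.app x (s.app x m) = m := by
    simpa using congr($(NatTrans.congr_app hsr x).hom m)
  refine ⟨fun x => ?_, hN.2.subset fun x hx hNx => hx ?_⟩
  · have := hN.1 x
    exact Module.Finite.of_surjective (r.app x).hom fun m => ⟨s.app x m, hrs x m⟩
  · exact (Function.LeftInverse.injective (hrs x)).subsingleton

theorem FinDim.biproduct {ι : Type} [Finite ι] (M : ι → Mod k C) [HasBiproduct M]
    (hM : ∀ i, FinDim (M i)) : FinDim (⨁ M) := by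
  have e (x : C) : ((⨁ M).obj x : Type) ≃ₗ[k] ∀ i, (M i).obj x :=
    (((evaluation C (ModuleCat k)).obj x).mapBiproduct M ≪≫
      ModuleCat.biproductIsoPi _).toLinearEquiv
  refine ⟨fun x => ?_, (Set.finite_iUnion fun i => (hM i).2).subset fun x hx => ?_⟩
  · have := fun i => (hM i).1 x
    exact Module.Finite.equiv (e x).symm
  · by_contra hsub
    have (i : ι) : Subsingleton ((M i).obj x) := by
      by_contra h
      exact hsub (Set.mem_iUnion.2 ⟨i, h⟩)
    exact hx (e x).toEquiv.subsingleton

variable [Preadditive C] [Linear k C]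

instance stdInj_obj_finiteDimensional [∀ a b : C, FiniteDimensional k (a ⟶ b)] (a x : C) :
    FiniteDimensional k ((stdInj k C a).obj x) :=
  inferInstanceAs (FiniteDimensional k (Module.Dual k (x ⟶ a)))

theorem subsingleton_stdInj_obj {a x : C} [Subsingleton (x ⟶ a)] :
    Subsingleton ((stdInj k C a).obj x) :=
  inferInstanceAs (Subsingleton (Module.Dual k (x ⟶ a)))

end

theorem finDim_stdInj_of_typeAInfinity [SmallCategory ℕ] [Preadditive ℕ] [Linear k ℕ]
    [∀ a b : ℕ, FiniteDimensional k (a ⟶ b)]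
    (hA : ∀ i j : ℕ, i < j → ∀ f : (j ⟶ i), f = 0) (a : ℕ) :
    FinDim (stdInj k ℕ a) := by
  refine ⟨fun x => inferInstance, (Set.finite_Iic a).subset fun x hx =>
    Set.mem_Iic.2 <| not_lt.1 fun hax => ?_⟩
  have : Subsingleton (x ⟶ a) := ⟨fun f g => (hA a x hax f).trans (hA a x hax g).symm⟩
  exact hx subsingleton_stdInj_obj

end ARPaper

open CategoryTheory ARPaper in
/-- Over a Hom-finite `k`-linear category of type `A_∞`, every
finitely cogenerated injective module is finite dimensional. -/
theorem fcgInj_finDim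
    (k : Type) [Field k] [SmallCategory ℕ] [Preadditive ℕ] [CategoryTheory.Linear k ℕ]
    [∀ a b : ℕ, FiniteDimensional k (a ⟶ b)]
    (hA : ∀ i j : ℕ, i < j → ∀ f : (j ⟶ i), f = 0)
    (I : Mod k ℕ) (hI : FCGInj k ℕ I) :
    FinDim I := by
  obtain ⟨n, a, hsummand⟩ := hI
  exact FinDim.of_isSummand hsummand
    (FinDim.biproduct _ fun i => finDim_stdInj_of_typeAInfinity hA (a i))
end
end

section
/- Let C be a k-linear Hom-finite category of type A_∞ with Mod C locally Noetherian, and let f : M → N be a morphism of finitely presented C-modules. Then f is projectively trivial in the abelian category fp C if and only if f is projectively trivial in Mod C. -/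
noncomputable section
namespace ARPaper
open CategoryTheory CategoryTheory.Limits Opposite

variable {k : Type} [Field k] {C : Type} [SmallCategory C] [Preadditive C] [Linear k C]

section Hom

variable (k)

/-- The Hom-space `Hom_C(M,N)` as a `k`-module. -/
def HomMod (M N : Mod k C) : ModuleCat k := ModuleCat.of k (M ⟶ N)

/-- Precomposition `Hom(Y,W) ⟶ Hom(X,W)` with `f : X ⟶ Y`. -/
def homPre {X Y : Mod k C} (f : X ⟶ Y) (W : Mod k C) : HomMod k Y W ⟶ HomMod k X W :=
  ModuleCat.ofHom
    { toFun := fun g => f ≫ g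
      map_add' := fun g h => by simp
      map_smul' := fun r g => by simp }

/-- Postcomposition `Hom(W,X) ⟶ Hom(W,Y)` with `f : X ⟶ Y`. -/
def homPost (W : Mod k C) {X Y : Mod k C} (f : X ⟶ Y) : HomMod k W X ⟶ HomMod k W Y :=
  ModuleCat.ofHom
    { toFun := fun g => g ≫ f
      map_add' := fun g h => by simp
      map_smul' := fun r g => by simp }

/-- The `C ᵒᵖ`-module `M^* = Hom_C(M, C(-,-))`, i.e. `a ↦ Hom_C(M, C(a,-))`. -/
def starObj (M : Mod k C) : Cᵒᵖ ⥤ ModuleCat k where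
  obj a := HomMod k M ((linearCoyoneda k C).obj a)
  map {a b} φ := homPost k M ((linearCoyoneda k C).map φ)
  map_id a := by
    ext g : 2
    simp [homPost, HomMod]
    rfl
  map_comp {a b c} φ ψ := by
    ext g : 2
    simp [homPost, HomMod]
    exact (Category.assoc (obj := Mod k C) _ _ _).symm

/-- The morphism `f^* : N^* ⟶ M^*` induced by `f : M ⟶ N`. -/
def starMap {M N : Mod k C} (f : M ⟶ N) : starObj k N ⟶ starObj k M where
  app a := homPre k f ((linearCoyoneda k C).obj a)
  naturality a b φ := by
    ext g : 2
    simp [homPre, homPost, starObj, HomMod]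
    exact (Category.assoc (obj := Mod k C) _ _ _).symm

/-- The transpose of (the module presented by) `d : P₁ ⟶ P₀`:
the cokernel of `d^* : P₀^* ⟶ P₁^*`. -/
def Transpose {P1 P0 : Mod k C} (d : P1 ⟶ P0) : Cᵒᵖ ⥤ ModuleCat k :=
  cokernel (starMap k d)

/-- `D Tr` of the module presented by `d`. -/
def DTr {P1 P0 : Mod k C} (d : P1 ⟶ P0) : Mod k C :=
  DModL k C (Transpose k d)

end Hom

end ARPaper
namespace ARPaper
open CategoryTheory CategoryTheory.Limits Opposite

section General
variable {D : Type u} [Category.{v} D] [Abelian D]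

/-- `0 → X → Y → Z → 0` is a short exact sequence. -/
def IsSES {X Y Z : D} (i : X ⟶ Y) (p : Y ⟶ Z) : Prop :=
  ∃ w : i ≫ p = 0, Mono i ∧ Epi p ∧ (ShortComplex.mk i p w).Exact

/-- A morphism is right minimal if every endomorphism of its source compatible with it
is an isomorphism. -/
def RightMinimal {X Y : D} (f : X ⟶ Y) : Prop :=
  ∀ g : X ⟶ X, g ≫ f = f → IsIso g

/-- A morphism is left minimal if every endomorphism of its target compatible with it
is an isomorphism. -/
def LeftMinimal {X Y : D} (f : X ⟶ Y) : Prop :=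
  ∀ g : Y ⟶ Y, f ≫ g = f → IsIso g

/-- `q : E ⟶ M` is right almost split: it is not a retraction, and every non-retraction
into `M` factors through it. -/
def RightAlmostSplit {E M : D} (q : E ⟶ M) : Prop :=
  ¬ IsSplitEpi q ∧ ∀ ⦃X : D⦄ (g : X ⟶ M), ¬ IsSplitEpi g → ∃ h : X ⟶ E, h ≫ q = g

/-- `i : X ⟶ E` is left almost split. -/
def LeftAlmostSplit {X E : D} (i : X ⟶ E) : Prop :=
  ¬ IsSplitMono i ∧ ∀ ⦃Y : D⦄ (g : X ⟶ Y), ¬ IsSplitMono g → ∃ h : E ⟶ Y, i ≫ h = g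

/-- An almost split (Auslander–Reiten) sequence. -/
def AlmostSplitSeq {X E M : D} (i : X ⟶ E) (q : E ⟶ M) : Prop :=
  IsSES i q ∧ LeftAlmostSplit i ∧ RightAlmostSplit q

/-- An object is indecomposable if it is nonzero and any biproduct decomposition
has a zero summand. -/
def Indecomposable (M : D) : Prop :=
  ¬ IsZero M ∧ ∀ (X Y : D), (M ≅ X ⊞ Y) → IsZero X ∨ IsZero Y

end General

variable {k : Type} [Field k] {C : Type} [SmallCategory C] [Preadditive C] [Linear k C]
variable (k C)

/-- A (finite) projective presentation `P₁ → P₀ → M → 0` by f.g. projectives. -/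
structure Pres (M : Mod k C) : Type 1 where
  P1 : Mod k C
  P0 : Mod k C
  fg1 : FGProj k C P1
  fg0 : FGProj k C P0
  proj1 : Projective P1
  proj0 : Projective P0
  d : P1 ⟶ P0
  p : P0 ⟶ M
  epi : Epi p
  w : d ≫ p = 0
  exact : (ShortComplex.mk d p w).Exact

/-- A minimal projective presentation. -/
structure MinPres (M : Mod k C) extends Pres k C M where
  min0 : RightMinimal p
  min1 : RightMinimal d

/-- `M` is finitely presented: it admits a presentation by f.g. projectives. -/
def FPmod (M : Mod k C) : Prop := Nonempty (Pres k C M)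

variable {k C}

/-- `D Tr M` computed from a presentation of `M`. -/
def Pres.DTrM {M : Mod k C} (pr : Pres k C M) : Mod k C := DTr k pr.d

/-- `Ext^1(M, N)` computed from a presentation of `M`:
the cokernel of `Hom(P₀,N) → Hom(Ω M, N)`. -/
def Pres.ext1 {M : Mod k C} (pr : Pres k C M) (N : Mod k C) : ModuleCat k :=
  cokernel (homPre k (kernel.ι pr.p) N)

end ARPaper
namespace ARPaper
open CategoryTheory CategoryTheory.Limits Opposite

section Trivial
variable {D : Type u} [Category.{v} D] [Abelian D]

/-- `f` is projectively trivial, i.e. `Ext¹(f,Z) = 0` for all `Z`; equivalently `f`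
factors through every epimorphism onto its target. -/
def ProjTrivial {X Y : D} (f : X ⟶ Y) : Prop :=
  ∀ (E : D) (p : E ⟶ Y), Epi p → ∃ h : X ⟶ E, h ≫ p = f

/-- `f` is injectively trivial, i.e. `Ext¹(Z,f) = 0` for all `Z`; equivalently `f`
factors through every monomorphism out of its source. -/
def InjTrivial {X Y : D} (f : X ⟶ Y) : Prop :=
  ∀ (E : D) (m : X ⟶ E), Mono m → ∃ h : E ⟶ Y, m ≫ h = f

/-- Relative version: projectively trivial within the full subcategory of objects
satisfying `Pred`. -/
def ProjTrivialOn (Pred : D → Prop) {X Y : D} (f : X ⟶ Y) : Prop :=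
  ∀ (E : D) (p : E ⟶ Y), Pred E → Epi p → ∃ h : X ⟶ E, h ≫ p = f

/-- Relative version: injectively trivial within the full subcategory of objects
satisfying `Pred`. -/
def InjTrivialOn (Pred : D → Prop) {X Y : D} (f : X ⟶ Y) : Prop :=
  ∀ (E : D) (m : X ⟶ E), Pred E → Mono m → ∃ h : E ⟶ Y, m ≫ h = f

end Trivial

variable {k : Type} [Field k] {C : Type} [SmallCategory C] [Preadditive C] [Linear k C]
variable (k)

/-- The submodule of `Hom(M,N)` of morphisms projectively trivial relative to `Pred`. -/
def ptrivSub (Pred : Mod k C → Prop) (M N : Mod k C) : Submodule k (M ⟶ N) where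
  carrier := {f | ProjTrivialOn Pred f}
  add_mem' := by
    intro f g hf hg E p hE hp
    obtain ⟨h1, e1⟩ := hf E p hE hp
    obtain ⟨h2, e2⟩ := hg E p hE hp
    exact ⟨h1 + h2, by simp [e1, e2]⟩
  zero_mem' := fun E p hE hp => ⟨0, by simp⟩
  smul_mem' := by
    intro r f hf E p hE hp
    obtain ⟨h1, e1⟩ := hf E p hE hp
    exact ⟨r • h1, by simp [e1]⟩

/-- The submodule of `Hom(M,N)` of morphisms injectively trivial relative to `Pred`. -/
def itrivSub (Pred : Mod k C → Prop) (M N : Mod k C) : Submodule k (M ⟶ N) where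
  carrier := {f | InjTrivialOn Pred f}
  add_mem' := by
    intro f g hf hg E m hE hm
    obtain ⟨h1, e1⟩ := hf E m hE hm
    obtain ⟨h2, e2⟩ := hg E m hE hm
    exact ⟨h1 + h2, by simp [e1, e2]⟩
  zero_mem' := fun E m hE hm => ⟨0, by simp⟩
  smul_mem' := by
    intro r f hf E m hE hm
    obtain ⟨h1, e1⟩ := hf E m hE hm
    exact ⟨r • h1, by simp [e1]⟩

/-- The stable Hom `\underline{Hom}(M,N)` relative to `Pred`. -/
def HomU (Pred : Mod k C → Prop) (M N : Mod k C) : ModuleCat k :=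
  ModuleCat.of k ((M ⟶ N) ⧸ ptrivSub k Pred M N)

/-- The costable Hom `\overline{Hom}(M,N)` relative to `Pred`. -/
def HomO (Pred : Mod k C → Prop) (M N : Mod k C) : ModuleCat k :=
  ModuleCat.of k ((M ⟶ N) ⧸ itrivSub k Pred M N)

/-- Class of a morphism in the stable Hom. -/
def HomU.mk (Pred : Mod k C → Prop) {M N : Mod k C} (f : M ⟶ N) : HomU k Pred M N :=
  Submodule.Quotient.mk f

/-- Class of a morphism in the costable Hom. -/
def HomO.mk (Pred : Mod k C → Prop) {M N : Mod k C} (f : M ⟶ N) : HomO k Pred M N :=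
  Submodule.Quotient.mk f

end ARPaper

/-!
A morphism `f : M ⟶ N` that factors through every epimorphism in `fp C` factors in particular
through the first term `P₀ ⟶ N` of a finite projective presentation of `N`, since `P₀` is itself
finitely presented. Factoring through a projective, `f` then lifts along every epimorphism onto
`N` in `Mod C`. The converse is immediate.
-/

namespace ARPaper
open CategoryTheory CategoryTheory.Limits

section Trivial
variable {D : Type*} [Category D]

theorem ProjTrivial.projTrivialOn {Pred : D → Prop} {X Y : D} {f : X ⟶ Y}
    (h : ProjTrivial f) : ProjTrivialOn Pred f :=
  fun E p _ hp => h E p hp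

theorem ProjTrivial.comp_of_projective {X P Y : D} [Projective P] (g : X ⟶ P) (q : P ⟶ Y) :
    ProjTrivial (g ≫ q) :=
  fun _ p _ => ⟨g ≫ Projective.factorThru q p, by rw [Category.assoc, Projective.factorThru_comp]⟩

theorem ProjTrivialOn.projTrivial {Pred : D → Prop} {X P Y : D} {f : X ⟶ Y}
    (h : ProjTrivialOn Pred f) (q : P ⟶ Y) [Projective P] [Epi q] (hP : Pred P) :
    ProjTrivial f := by
  obtain ⟨g, rfl⟩ := h P q hP inferInstance
  exact .comp_of_projective g q

end Trivial

variable {k : Type} [Field k] {C : Type} [SmallCategory C] [Preadditive C] [Linear k C]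

theorem fpmod_of_fgProj {P : Mod k C} (hfg : FGProj k C P) [hP : Projective P] :
    FPmod k C P :=
  ⟨{ P1 := P, P0 := P, fg1 := hfg, fg0 := hfg, proj1 := hP, proj0 := hP
     d := 0, p := 𝟙 P, epi := inferInstance, w := by simp
     exact := (ShortComplex.exact_iff_mono _ rfl).2 (by dsimp; infer_instance) }⟩

end ARPaper

open CategoryTheory CategoryTheory.Limits ARPaper in
/-- Over a Hom-finite `k`-linear category of type `A_∞` with `Mod C`
locally Noetherian, a morphism of finitely presented modules is projectively trivial in
`fp C` (i.e. factors through every epimorphism in `fp C` onto its target) if and only if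
it is projectively trivial in `Mod C`. -/
theorem projTrivial_fp_iff_projTrivial
    (k : Type) [Field k] [SmallCategory ℕ] [Preadditive ℕ] [CategoryTheory.Linear k ℕ]
    [∀ a b : ℕ, FiniteDimensional k (a ⟶ b)]
    (hA : ∀ i j : ℕ, i < j → ∀ f : (j ⟶ i), f = 0)
    (noeth : ∀ (M N : Mod k ℕ) (m : N ⟶ M), FGmod k ℕ M → Mono m → FGmod k ℕ N)
    {M N : Mod k ℕ} (hM : FPmod k ℕ M) (hN : FPmod k ℕ N) (f : M ⟶ N) :
    ProjTrivialOn (FPmod k ℕ) f ↔ ProjTrivial f := by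
  obtain ⟨pres⟩ := hN
  have := pres.epi
  have := pres.proj0
  exact ⟨fun h => h.projTrivial pres.p (fpmod_of_fgProj pres.fg0), ProjTrivial.projTrivialOn⟩
end
end
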